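/- arXiv:2203.01894 — 4 statements merged into one kernel-verified Lean document; each statement's English description precedes it below -/
import Mathlib

section
/- Let f : [a,b] → ℝ be continuous and piecewise linear with no horizontal segments, and let m > 0 be the minimum absolute value of the slopes of its linear segments. Then every direction v = e^{iθ} with 0 < θ < π/2 and tan θ > 1/m is admissible, i.e., for each local extremum P of f there is ε > 0 such that all points of the graph of f with x-coordinate within ε of that of P (other than P itself) lie strictly on one side of the line through P orthogonal to v. -/
open Real Set

/-- Height of a point of the plane in the direction `e^{iθ}`. -/
noncomputable def heightF (θ : ℝ) (p : ℝ × ℝ) : ℝ :=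
  p.1 * Real.cos θ + p.2 * Real.sin θ

/-- `f` is continuous piecewise linear on `[a,b]` with vertices `x 0 < ⋯ < x n`
and slope `c i` on the `i`-th segment. -/
def PiecewiseLinearOn (f : ℝ → ℝ) (a b : ℝ) (n : ℕ) (x : Fin (n + 1) → ℝ)
    (c : Fin n → ℝ) : Prop :=
  x 0 = a ∧ x (Fin.last n) = b ∧ StrictMono x ∧
    ∀ i : Fin n, ∀ t ∈ Set.Icc (x i.castSucc) (x i.succ),
      f t = f (x i.castSucc) + c i * (t - x i.castSucc)

/-- The admissibility condition of direction `e^{iθ}` at the point `(p, f p)`: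
all nearby graph points lie strictly on one open side of the line through
`(p, f p)` orthogonal to `e^{iθ}`. -/
def AdmissibleAt (f : ℝ → ℝ) (a b θ p : ℝ) : Prop :=
  ∃ ε > 0,
    (∀ x ∈ Set.Icc a b, |x - p| < ε → x ≠ p →
        heightF θ (p, f p) < heightF θ (x, f x)) ∨
    (∀ x ∈ Set.Icc a b, |x - p| < ε → x ≠ p →
        heightF θ (x, f x) < heightF θ (p, f p))

/-! The slope bound `m * |y - p| ≤ |f y - f p|` holds near every point `p` of `[a, b]`: the
segments not containing `p` stay away from it, and on those containing it `f` is affine with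
slope at least `m` in absolute value. At a local maximum this forces `f y ≤ f p - m * |y - p|`,
and since `|cot θ| < m` the graph then lies strictly below the line through `(p, f p)` of
slope `-cot θ`; at a local minimum it lies strictly above. -/

open Filter Topology

lemma Fin.exists_mem_Icc_castSucc_succ {α : Type*} [LinearOrder α] {n : ℕ} (hn : n ≠ 0)
    {x : Fin (n + 1) → α} {y : α} (h0 : x 0 ≤ y) (hlast : y ≤ x (Fin.last n)) :
    ∃ i : Fin n, y ∈ Icc (x i.castSucc) (x i.succ) := by
  obtain ⟨k, rfl⟩ := Nat.exists_eq_succ_of_ne_zero hn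
  by_contra! h
  simp only [mem_Icc, not_and, not_le] at h
  have hle : ∀ j, x j ≤ y := Fin.induction h0 fun i hi => (h i hi).le
  exact (h (Fin.last k) (hle _)).not_ge hlast

namespace PiecewiseLinearOn

variable {f : ℝ → ℝ} {a b : ℝ} {n : ℕ} {x : Fin (n + 1) → ℝ} {c : Fin n → ℝ}

lemma sub_eq_mul_sub (hpl : PiecewiseLinearOn f a b n x c) (i : Fin n) {y p : ℝ}
    (hy : y ∈ Icc (x i.castSucc) (x i.succ)) (hp : p ∈ Icc (x i.castSucc) (x i.succ)) :
    f y - f p = c i * (y - p) := by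
  rw [hpl.2.2.2 i y hy, hpl.2.2.2 i p hp]
  ring

lemma eventually_mul_abs_sub_le (hpl : PiecewiseLinearOn f a b n x c) (hab : a < b) {m : ℝ}
    (hslope : ∀ i, m ≤ |c i|) (p : ℝ) :
    ∀ᶠ y in 𝓝[Icc a b] p, m * |y - p| ≤ |f y - f p| := by
  have hn : n ≠ 0 := by
    rintro rfl
    exact hab.ne (hpl.1.symm.trans hpl.2.1)
  have hsegment : ∀ i : Fin n, ∀ᶠ y in 𝓝 p,
      y ∈ Icc (x i.castSucc) (x i.succ) → m * |y - p| ≤ |f y - f p| := by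
    intro i
    by_cases hp : p ∈ Icc (x i.castSucc) (x i.succ)
    · refine Eventually.of_forall fun y hy => ?_
      rw [hpl.sub_eq_mul_sub i hy hp, abs_mul]
      exact mul_le_mul_of_nonneg_right (hslope i) (abs_nonneg _)
    · filter_upwards [isClosed_Icc.isOpen_compl.mem_nhds hp] with y hy hy'
      exact absurd hy' hy
  rw [eventually_nhdsWithin_iff]
  filter_upwards [eventually_all.2 hsegment] with y hy hyI
  obtain ⟨i, hi⟩ := Fin.exists_mem_Icc_castSucc_succ hn (hpl.1 ▸ hyI.1) (hpl.2.1 ▸ hyI.2)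
  exact hy i hi

end PiecewiseLinearOn

lemma heightF_lt_of_mul_abs_sub_le {θ m : ℝ} (hsin : 0 ≤ sin θ) (hcos : |cos θ| < m * sin θ)
    {p q : ℝ × ℝ} (hne : q.1 ≠ p.1) (h : m * |q.1 - p.1| ≤ p.2 - q.2) :
    heightF θ q < heightF θ p := by
  have hd : 0 < |q.1 - p.1| := abs_pos.2 (sub_ne_zero.2 hne)
  have : (q.1 - p.1) * cos θ < (p.2 - q.2) * sin θ :=
    calc (q.1 - p.1) * cos θ ≤ |q.1 - p.1| * |cos θ| := by
          rw [← abs_mul]; exact le_abs_self _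
      _ < |q.1 - p.1| * (m * sin θ) := mul_lt_mul_of_pos_left hcos hd
      _ = (m * |q.1 - p.1|) * sin θ := by ring
      _ ≤ (p.2 - q.2) * sin θ := mul_le_mul_of_nonneg_right h hsin
  simp only [heightF]
  linarith

lemma admissibleAt_of_eventually {f : ℝ → ℝ} {a b θ p : ℝ}
    (h : (∀ᶠ y in 𝓝[Icc a b] p, y ≠ p → heightF θ (p, f p) < heightF θ (y, f y)) ∨
      ∀ᶠ y in 𝓝[Icc a b] p, y ≠ p → heightF θ (y, f y) < heightF θ (p, f p)) :
    AdmissibleAt f a b θ p := by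
  simp only [eventually_nhdsWithin_iff, Metric.eventually_nhds_iff, Real.dist_eq] at h
  rcases h with ⟨ε, hε, h⟩ | ⟨ε, hε, h⟩
  · exact ⟨ε, hε, Or.inl fun y hy hyε => h hyε hy⟩
  · exact ⟨ε, hε, Or.inr fun y hy hyε => h hyε hy⟩

/-- if `f` is continuous piecewise linear with no horizontal segments
and all slopes of absolute value at least `m > 0`, then every direction `e^{iθ}`
with `0 < θ < π/2` and `tan θ > 1/m` is admissible. -/
theorem admissible_of_tan_gt (f : ℝ → ℝ) (a b m : ℝ) (hab : a < b) (hm : 0 < m)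
    (n : ℕ) (x : Fin (n + 1) → ℝ) (c : Fin n → ℝ)
    (hpl : PiecewiseLinearOn f a b n x c)
    (hslope : ∀ i, m ≤ |c i|)
    (θ : ℝ) (hθ0 : 0 < θ) (hθ1 : θ < Real.pi / 2) (htan : 1 / m < Real.tan θ) :
    ∀ p ∈ Set.Icc a b,
      (IsLocalMaxOn f (Set.Icc a b) p ∨ IsLocalMinOn f (Set.Icc a b) p) →
      AdmissibleAt f a b θ p := by
  intro p _ hext
  have hcos : 0 < cos θ := cos_pos_of_mem_Ioo ⟨by linarith [pi_pos], hθ1⟩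
  have hsin : 0 < sin θ := sin_pos_of_pos_of_lt_pi hθ0 (by linarith [pi_pos])
  have hcot : |cos θ| < m * sin θ := by
    rw [tan_eq_sin_div_cos, div_lt_div_iff₀ hm hcos] at htan
    rw [abs_of_pos hcos]
    linarith
  have hnear := hpl.eventually_mul_abs_sub_le hab hslope p
  rcases hext with hmax | hmin
  · refine admissibleAt_of_eventually (Or.inr ?_)
    filter_upwards [hnear, hmax] with y hy hfy hne
    rw [abs_sub_comm (f y), abs_of_nonneg (sub_nonneg.2 hfy)] at hy
    exact heightF_lt_of_mul_abs_sub_le hsin.le hcot hne hy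
  · refine admissibleAt_of_eventually (Or.inl ?_)
    filter_upwards [hnear, hmin] with y hy hfy hne
    rw [abs_of_nonneg (sub_nonneg.2 hfy), abs_sub_comm y] at hy
    exact heightF_lt_of_mul_abs_sub_le hsin.le hcot hne.symm hy
end

section
/- Let λ_k be a nonzero persistence landscape of a continuous function f : [a,b] → ℝ (with respect to vertical sublevel-set persistence), and let t₀ < t₁ < ⋯ be the t-coordinates of vertices of the graph of λ_k. Define y₀ = t₀ and, recursively, yᵢ = tᵢ if (tᵢ, 0) is a take-off point and yᵢ = 2(tᵢ − yᵢ₋₁/2) otherwise. Then every yᵢ is the y-value of a critical point of f. -/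
open Set

/-- The tent function of a persistence diagram point `(β, δ)`. -/
noncomputable def tent (β δ t : ℝ) : ℝ := max 0 (min (t - β) (δ - t))

/-- The `k`-th largest element of a finite multiset of reals (`k ≥ 1`), or `0`. -/
noncomputable def kmax (s : Multiset ℝ) (k : ℕ) : ℝ :=
  ((s.sort (· ≤ ·)).reverse).getD (k - 1) 0

/-- The `k`-th persistence landscape of a finite diagram `D` (`k ≥ 1`). -/
noncomputable def landscape (D : Multiset (ℝ × ℝ)) (k : ℕ) (t : ℝ) : ℝ :=
  kmax (D.map fun p => tent p.1 p.2 t) k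

/-- The set of critical values (`y`-values of critical points) of `f` on `[a,b]`. -/
def CritVal (f : ℝ → ℝ) (a b : ℝ) : Set ℝ :=
  {y | ∃ x ∈ Set.Icc a b,
    (IsLocalMaxOn f (Set.Icc a b) x ∨ IsLocalMinOn f (Set.Icc a b) x) ∧ f x = y}

/-- `(t, 0)` is a take-off point of `g`: `g` vanishes just before `t` and is nonzero
just after. -/
def TakeOff (g : ℝ → ℝ) (t : ℝ) : Prop :=
  ∃ ε > 0, (∀ s, t - ε < s → s ≤ t → g s = 0) ∧ ∀ s, t < s → s < t + ε → g s ≠ 0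

/-- `t` is a vertex of the graph of `g`: `g` is not affine on any neighbourhood of `t`. -/
def VertexOf (g : ℝ → ℝ) (t : ℝ) : Prop :=
  ¬ ∃ ε > 0, ∃ c d : ℝ, ∀ s, |s - t| < ε → g s = c * s + d

/-!
On each side of a point `r`, a tent `tent β δ` coincides with one of the lines `0`, `s - β`,
`δ - s`, and any two lines are ordered on a one-sided neighbourhood of `r`. Hence the `k`-th
largest tent is eventually one fixed tent, and on each side of every point `λ_k` is a line of
slope `0` or `±1` vanishing at a coordinate of the diagram. Between two consecutive vertices
`λ_k` is affine, so its germ to the right of `tᵢ` is its germ to the left of `tᵢ₊₁`.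

By induction, to the right of `tᵢ` we have `λ_k s = c (s - yᵢ)` with `c ∈ {0, ±1}` and `yᵢ`
critical. Left of `t₀`, and left of `tᵢ₊₁` when `c = 0`, `λ_k` vanishes, so the vertex is a
take-off point and the outgoing line is `±(s - tᵢ₊₁)`. Otherwise the incoming line `±(s - yᵢ)`
and the outgoing line meet at `tᵢ₊₁`; the outgoing line is either `0`, forcing
`yᵢ = tᵢ₊₁ = yᵢ₊₁`, or the reflected line, which vanishes at `2 tᵢ₊₁ - yᵢ`.
-/

open Filter Topology

theorem List.exists_perm_pairwise {ι : Type*} {R : ι → ι → Prop}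
    (htrans : ∀ a b c, R a b → R b c → R a c) {l : List ι}
    (htotal : ∀ a ∈ l, ∀ b ∈ l, R a b ∨ R b a) : ∃ l' : List ι, l'.Perm l ∧ l'.Pairwise R := by
  classical
  refine ⟨(l.attach.mergeSort fun a b => decide (R a b)).map Subtype.val, ?_, ?_⟩
  · simpa using (List.mergeSort_perm l.attach _).map Subtype.val
  · rw [List.pairwise_map]
    refine (List.pairwise_mergeSort (fun a b c => ?_) (fun a b => ?_) _).imp ?_
    · simpa using htrans a b c
    · simpa using htotal a a.2 b b.2
    · simp

theorem kmax_coe_of_pairwise {l : List ℝ} (hl : l.Pairwise (· ≥ ·)) (k : ℕ) :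
    kmax l k = l.getD (k - 1) 0 := by
  have hsort : Multiset.sort (l : Multiset ℝ) (· ≤ ·) = l.reverse :=
    List.Perm.eq_of_pairwise' (Multiset.pairwise_sort _ _) (List.pairwise_reverse.2 hl)
      ((Multiset.coe_eq_coe.1 (Multiset.sort_eq _ _)).trans (List.reverse_perm l).symm)
  rw [kmax, hsort, List.reverse_reverse]

theorem kmax_eq_zero {m : Multiset ℝ} (h : ∀ x ∈ m, x = 0) (k : ℕ) : kmax m k = 0 := by
  rw [Multiset.eq_replicate.2 ⟨rfl, h⟩, ← Multiset.coe_replicate,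
    kmax_coe_of_pairwise (List.pairwise_replicate.2 (Or.inr le_rfl))]
  simp

theorem exists_eventuallyEq_kmax {ι α : Type*} {l : Filter α} (m : Multiset ι)
    (F : ι → α → ℝ) (k : ℕ) (hF : ∀ i ∈ m, ∀ j ∈ m, F i ≤ᶠ[l] F j ∨ F j ≤ᶠ[l] F i) :
    (fun s => kmax (m.map (F · s)) k) =ᶠ[l] 0 ∨
      ∃ i ∈ m, (fun s => kmax (m.map (F · s)) k) =ᶠ[l] F i := by
  classical
  obtain ⟨L, hLm, hL⟩ := List.exists_perm_pairwise (R := fun i j => F j ≤ᶠ[l] F i)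
    (fun _ _ _ hab hbc => hbc.trans hab) (l := m.toList)
    (fun i hi j hj => hF j (Multiset.mem_toList.1 hj) i (Multiset.mem_toList.1 hi))
  have hm : (L : Multiset ι) = m := by
    rw [← Multiset.coe_toList m]; exact Multiset.coe_eq_coe.2 hLm
  subst hm
  have hsorted : ∀ᶠ s in l, (L.map (F · s)).Pairwise (· ≥ ·) := by
    have : ∀ᶠ s in l, ∀ i ∈ L.toFinset, ∀ j ∈ L.toFinset, F j ≤ᶠ[l] F i → F j s ≤ F i s := by
      simp only [eventually_all_finset]
      intro i _ j _
      by_cases h : F j ≤ᶠ[l] F i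
      · exact h.mono fun s hs _ => hs
      · exact Eventually.of_forall fun _ h' => absurd h' h
    filter_upwards [this] with s hs
    exact List.pairwise_map.2 (hL.imp_of_mem fun hi hj h =>
      hs _ (List.mem_toFinset.2 hi) _ (List.mem_toFinset.2 hj) h)
  by_cases hk : k - 1 < L.length
  · refine Or.inr ⟨L[k - 1], Multiset.mem_coe.2 (List.getElem_mem hk), ?_⟩
    filter_upwards [hsorted] with s hs
    simp [Multiset.map_coe, kmax_coe_of_pairwise hs, List.getElem?_eq_getElem hk]
  · refine Or.inl ?_
    filter_upwards [hsorted] with s hs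
    simp [Multiset.map_coe, kmax_coe_of_pairwise hs, List.getElem?_eq_none (not_lt.1 hk)]

theorem line_le_or_le {l : Filter ℝ} {r : ℝ} (hl : l = 𝓝[≥] r ∨ l = 𝓝[≤] r) (c x c' x' : ℝ) :
    (∀ᶠ s in l, c * (s - x) ≤ c' * (s - x')) ∨ ∀ᶠ s in l, c' * (s - x') ≤ c * (s - x) := by
  have hlr : l ≤ 𝓝 r := by rcases hl with rfl | rfl <;> exact nhdsWithin_le_nhds
  set e : ℝ → ℝ := fun s => c * (s - x) - c' * (s - x') with he
  have he_cont : Continuous e := by fun_prop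
  rcases lt_trichotomy (e r) 0 with h | h | h
  · exact Or.inl (Eventually.mono (hlr ((he_cont.tendsto r).eventually_lt_const h)) fun s hs => by
      simp only [he] at hs; linarith)
  · have key : ∀ s, e s = (c - c') * (s - r) := fun s => by
      simp only [he] at h ⊢; linear_combination h
    have hside : (∀ᶠ s in l, 0 ≤ s - r) ∨ ∀ᶠ s in l, s - r ≤ 0 := by
      rcases hl with rfl | rfl
      · exact Or.inl (eventually_nhdsWithin_of_forall fun s hs => sub_nonneg.2 hs)
      · exact Or.inr (eventually_nhdsWithin_of_forall fun s hs => sub_nonpos.2 hs)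
    rcases hside with hs | hs <;> rcases le_total c c' with hc | hc
    · exact Or.inl (hs.mono fun s hs => by nlinarith [key s])
    · exact Or.inr (hs.mono fun s hs => by nlinarith [key s])
    · exact Or.inr (hs.mono fun s hs => by nlinarith [key s])
    · exact Or.inl (hs.mono fun s hs => by nlinarith [key s])
  · exact Or.inr (Eventually.mono (hlr ((he_cont.tendsto r).eventually_const_lt h)) fun s hs => by
      simp only [he] at hs; linarith)

def HasLineGerm (C : Set ℝ) (l : Filter ℝ) (g : ℝ → ℝ) : Prop :=
  ∃ c x, (c = 0 ∨ (c = 1 ∨ c = -1) ∧ x ∈ C) ∧ g =ᶠ[l] fun s => c * (s - x)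

namespace HasLineGerm

variable {C : Set ℝ} {l : Filter ℝ} {r : ℝ} {f g : ℝ → ℝ}

theorem zero : HasLineGerm C l 0 :=
  ⟨0, 0, Or.inl rfl, Eventually.of_forall fun s => by simp⟩

theorem le_or_le (hl : l = 𝓝[≥] r ∨ l = 𝓝[≤] r) (hf : HasLineGerm C l f)
    (hg : HasLineGerm C l g) : f ≤ᶠ[l] g ∨ g ≤ᶠ[l] f := by
  obtain ⟨c, x, -, hf⟩ := hf
  obtain ⟨c', x', -, hg⟩ := hg
  rcases line_le_or_le hl c x c' x' with h | h
  · exact Or.inl (hf.trans_le (EventuallyLE.trans_eq h hg.symm))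
  · exact Or.inr (hg.trans_le (EventuallyLE.trans_eq h hf.symm))

theorem max (hl : l = 𝓝[≥] r ∨ l = 𝓝[≤] r) (hf : HasLineGerm C l f)
    (hg : HasLineGerm C l g) : HasLineGerm C l fun s => max (f s) (g s) := by
  rcases hf.le_or_le hl hg with h | h
  · obtain ⟨c, x, hcx, hg⟩ := hg
    exact ⟨c, x, hcx, EventuallyEq.trans (h.mono fun s hs => max_eq_right hs) hg⟩
  · obtain ⟨c, x, hcx, hf⟩ := hf
    exact ⟨c, x, hcx, EventuallyEq.trans (h.mono fun s hs => max_eq_left hs) hf⟩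

theorem min (hl : l = 𝓝[≥] r ∨ l = 𝓝[≤] r) (hf : HasLineGerm C l f)
    (hg : HasLineGerm C l g) : HasLineGerm C l fun s => min (f s) (g s) := by
  rcases hf.le_or_le hl hg with h | h
  · obtain ⟨c, x, hcx, hf⟩ := hf
    exact ⟨c, x, hcx, EventuallyEq.trans (h.mono fun s hs => min_eq_left hs) hf⟩
  · obtain ⟨c, x, hcx, hg⟩ := hg
    exact ⟨c, x, hcx, EventuallyEq.trans (h.mono fun s hs => min_eq_right hs) hg⟩

end HasLineGerm

theorem hasLineGerm_tent {C : Set ℝ} {l : Filter ℝ} {r β δ : ℝ}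
    (hl : l = 𝓝[≥] r ∨ l = 𝓝[≤] r) (hβ : β ∈ C) (hδ : δ ∈ C) :
    HasLineGerm C l (tent β δ) := by
  have hrise : HasLineGerm C l fun s => s - β :=
    ⟨1, β, Or.inr ⟨Or.inl rfl, hβ⟩, Eventually.of_forall fun s => by simp⟩
  have hfall : HasLineGerm C l fun s => δ - s :=
    ⟨-1, δ, Or.inr ⟨Or.inr rfl, hδ⟩, Eventually.of_forall fun s => by ring⟩
  exact HasLineGerm.zero.max hl (hrise.min hl hfall)

theorem hasLineGerm_landscape {C : Set ℝ} {l : Filter ℝ} {r : ℝ}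
    (hl : l = 𝓝[≥] r ∨ l = 𝓝[≤] r) {D : Multiset (ℝ × ℝ)}
    (hC : ∀ p ∈ D, p.1 ∈ C ∧ p.2 ∈ C) (k : ℕ) : HasLineGerm C l (landscape D k) := by
  have htent : ∀ p ∈ D, HasLineGerm C l (tent p.1 p.2) :=
    fun p hp => hasLineGerm_tent hl (hC p hp).1 (hC p hp).2
  rcases exists_eventuallyEq_kmax D (fun p => tent p.1 p.2) k
    (fun p hp q hq => (htent p hp).le_or_le hl (htent q hq)) with h | ⟨p, hp, h⟩
  · obtain ⟨c, x, hcx, h0⟩ := (HasLineGerm.zero : HasLineGerm C l 0)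
    exact ⟨c, x, hcx, h.trans h0⟩
  · obtain ⟨c, x, hcx, hp⟩ := htent p hp
    exact ⟨c, x, hcx, h.trans hp⟩

theorem landscape_eventually_eq_zero_atBot (D : Multiset (ℝ × ℝ)) (k : ℕ) :
    ∀ᶠ s in atBot, landscape D k s = 0 := by
  obtain ⟨s₀, hs₀⟩ := (D.map Prod.fst).toFinset.bddBelow
  filter_upwards [eventually_le_atBot s₀] with s hs
  refine kmax_eq_zero (fun v hv => ?_) k
  obtain ⟨p, hp, rfl⟩ := Multiset.mem_map.1 hv
  have hβ : s₀ ≤ p.1 := hs₀ (by simpa using ⟨p.2, hp⟩)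
  exact max_eq_left (min_le_of_left_le (by linarith))

theorem not_vertexOf_iff {g : ℝ → ℝ} {r : ℝ} :
    ¬ VertexOf g r ↔ ∃ c d, g =ᶠ[𝓝 r] fun s => c * s + d := by
  simp only [VertexOf, not_not, EventuallyEq, Metric.eventually_nhds_iff, Real.dist_eq]
  constructor
  · rintro ⟨ε, hε, c, d, h⟩
    exact ⟨c, d, ε, hε, h⟩
  · rintro ⟨c, d, ε, hε, h⟩
    exact ⟨ε, hε, c, d, h⟩

theorem not_vertexOf_of_eventuallyEq {g : ℝ → ℝ} {t c x : ℝ}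
    (hL : g =ᶠ[𝓝[≤] t] fun s => c * (s - x)) (hR : g =ᶠ[𝓝[≥] t] fun s => c * (s - x)) :
    ¬ VertexOf g t := by
  refine not_vertexOf_iff.2 ⟨c, -(c * x), ?_⟩
  rw [← nhdsLE_sup_nhdsGE]
  exact (eventually_sup.2 ⟨hL, hR⟩).mono fun s hs => by rw [hs]; ring

theorem exists_eqOn_affine_of_forall_not_vertexOf {g : ℝ → ℝ} {U : Set ℝ} (hU : IsOpen U)
    (hU' : IsPreconnected U) (hg : ∀ r ∈ U, ¬ VertexOf g r) :
    ∃ c d, Set.EqOn g (fun s => c * s + d) U := by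
  have hloc : ∀ r ∈ U, ∃ c, HasDerivAt g c r ∧ deriv g =ᶠ[𝓝 r] fun _ => c := by
    intro r hr
    obtain ⟨c, d, h⟩ := not_vertexOf_iff.1 (hg r hr)
    have hline : ∀ s, HasDerivAt (fun s => c * s + d) c s := fun s => by
      simpa using ((hasDerivAt_id s).const_mul c).add_const d
    exact ⟨c, (hline r).congr_of_eventuallyEq h,
      h.deriv.mono fun s hs => hs.trans (hline s).deriv⟩
  have hdiff : DifferentiableOn ℝ g U := fun r hr =>
    (hloc r hr).choose_spec.1.differentiableAt.differentiableWithinAt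
  have hderiv : ∀ r ∈ U, HasDerivAt (deriv g) 0 r := fun r hr =>
    (hasDerivAt_const r _).congr_of_eventuallyEq (hloc r hr).choose_spec.2
  obtain ⟨c, hc⟩ := hU.exists_is_const_of_deriv_eq_zero hU'
    (fun r hr => (hderiv r hr).differentiableAt.differentiableWithinAt)
    (fun r hr => (hderiv r hr).deriv)
  obtain ⟨d, hd⟩ := hU.exists_eq_add_of_deriv_eq hU' hdiff
    (g := fun s => c * s) (by fun_prop) (fun r hr => by simp [hc r hr])
  exact ⟨c, d, hd⟩

theorem line_eq_affine_of_eventually {l : Filter ℝ} [l.NeBot] {t c x a b : ℝ}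
    (hl : l ≤ 𝓝[≠] t) (h : ∀ᶠ s in l, c * (s - x) = a * s + b) (s : ℝ) :
    c * (s - x) = a * s + b := by
  obtain ⟨s₁, hs₁, hs₁t⟩ := (h.and (hl self_mem_nhdsWithin)).exists
  obtain ⟨s₂, hs₂, hs₂s₁⟩ :=
    (h.and (hl (mem_nhdsWithin_of_mem_nhds (eventually_ne_nhds (Ne.symm hs₁t))))).exists
  have hca : (c - a) * (s₂ - s₁) = 0 := by linear_combination hs₂ - hs₁
  have hca : c = a := by
    simpa [sub_eq_zero, hs₂s₁] using hca
  subst hca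
  linear_combination hs₁

theorem eventuallyEq_nhdsLE_of_forall_not_vertexOf {g : ℝ → ℝ} {U : Set ℝ} (hU : IsOpen U)
    (hU' : IsPreconnected U) (hv : ∀ r ∈ U, ¬ VertexOf g r) {l : Filter ℝ} [l.NeBot]
    {r w c x c' x' : ℝ} (hl : l ≤ 𝓝[≠] r) (hUl : U ∈ l) (hUw : U ∈ 𝓝[<] w)
    (h : g =ᶠ[l] fun s => c * (s - x)) (hw : g =ᶠ[𝓝[≤] w] fun s => c' * (s - x')) :
    g =ᶠ[𝓝[≤] w] fun s => c * (s - x) := by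
  obtain ⟨a, b, hab⟩ := exists_eqOn_affine_of_forall_not_vertexOf hU hU' hv
  have h₁ := line_eq_affine_of_eventually hl (a := a) (b := b) <| by
    filter_upwards [h, hUl] with s hs hsU
    rw [← hs, hab hsU]
  have h₂ := line_eq_affine_of_eventually (nhdsLT_le_nhdsNE w) (a := a) (b := b) <| by
    filter_upwards [hw.filter_mono (nhdsWithin_mono _ Set.Iio_subset_Iic_self), hUw]
      with s hs hsU
    rw [← hs, hab hsU]
  exact hw.trans (Eventually.of_forall fun s => (h₂ s).trans (h₁ s).symm)

theorem eventuallyEq_nhdsLE_of_forall_not_vertexOf_Ioo {g : ℝ → ℝ} {u w c x c' x' : ℝ}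
    (huw : u < w) (hv : ∀ r ∈ Set.Ioo u w, ¬ VertexOf g r)
    (hu : g =ᶠ[𝓝[≥] u] fun s => c * (s - x)) (hw : g =ᶠ[𝓝[≤] w] fun s => c' * (s - x')) :
    g =ᶠ[𝓝[≤] w] fun s => c * (s - x) :=
  eventuallyEq_nhdsLE_of_forall_not_vertexOf isOpen_Ioo isPreconnected_Ioo hv
    (nhdsGT_le_nhdsNE u) (Ioo_mem_nhdsGT huw) (Ioo_mem_nhdsLT huw)
    (hu.filter_mono (nhdsWithin_mono _ Set.Ioi_subset_Ici_self)) hw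

theorem eventuallyEq_zero_nhdsLE_of_forall_not_vertexOf {g : ℝ → ℝ} {w c' x' : ℝ}
    (hv : ∀ r < w, ¬ VertexOf g r) (h0 : ∀ᶠ s in atBot, g s = 0)
    (hw : g =ᶠ[𝓝[≤] w] fun s => c' * (s - x')) : g =ᶠ[𝓝[≤] w] 0 := by
  obtain ⟨s₀, hs₀⟩ := eventually_atBot.1 (h0.and (eventually_lt_atBot w))
  have h := eventuallyEq_nhdsLE_of_forall_not_vertexOf isOpen_Iio isPreconnected_Iio hv
    (nhdsLT_le_nhdsNE s₀) (mem_nhdsWithin_of_mem_nhds (Iio_mem_nhds (hs₀ s₀ le_rfl).2))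
    self_mem_nhdsWithin (c := 0) (x := 0)
    (eventually_nhdsWithin_of_forall fun s hs => by simp [(hs₀ s (le_of_lt hs)).1]) hw
  exact h.trans (Eventually.of_forall fun s => by simp)

theorem takeOff_iff {g : ℝ → ℝ} {t : ℝ} :
    TakeOff g t ↔ g =ᶠ[𝓝[≤] t] 0 ∧ ∀ᶠ s in 𝓝[>] t, g s ≠ 0 := by
  constructor
  · rintro ⟨ε, hε, hzero, hne⟩
    exact ⟨mem_nhdsLE_iff_exists_Ioc_subset.2 ⟨t - ε, by simpa using hε,
        fun s hs => hzero s hs.1 hs.2⟩,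
      mem_nhdsGT_iff_exists_Ioo_subset.2 ⟨t + ε, by simpa using hε, fun s hs => hne s hs.1 hs.2⟩⟩
  · rintro ⟨hzero, hne⟩
    obtain ⟨l, hl, hlt⟩ := mem_nhdsLE_iff_exists_Ioc_subset.1 hzero
    obtain ⟨u, hu, hut⟩ := mem_nhdsGT_iff_exists_Ioo_subset.1 hne
    refine ⟨min (t - l) (u - t), lt_min (sub_pos.2 hl) (sub_pos.2 hu), fun s h₁ h₂ => ?_,
      fun s h₁ h₂ => ?_⟩
    · exact hlt ⟨by linarith [min_le_left (t - l) (u - t)], h₂⟩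
    · exact hut ⟨h₁, by linarith [min_le_right (t - l) (u - t)]⟩

def RightGermRoot (C : Set ℝ) (g : ℝ → ℝ) (t z : ℝ) : Prop :=
  z ∈ C ∧ ∃ c, (c = 0 ∨ c = 1 ∨ c = -1) ∧ g =ᶠ[𝓝[≥] t] fun s => c * (s - z)

theorem takeOff_and_rightGermRoot {C : Set ℝ} {g : ℝ → ℝ} {t : ℝ}
    (hL : g =ᶠ[𝓝[≤] t] 0) (hR : HasLineGerm C (𝓝[≥] t) g) (hv : VertexOf g t) :
    TakeOff g t ∧ RightGermRoot C g t t := by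
  obtain ⟨c, x, hcx, hR⟩ := hR
  have hval : c * (t - x) = 0 := by
    rw [← hR.eq_of_nhdsWithin Set.self_mem_Ici, hL.eq_of_nhdsWithin Set.self_mem_Iic]; rfl
  rcases hcx with rfl | ⟨hc, hx⟩
  · exact absurd (not_vertexOf_of_eventuallyEq
      (hL.trans (Eventually.of_forall fun s => by simp)) hR) (not_not.2 hv)
  have hc0 : c ≠ 0 := by rcases hc with rfl | rfl <;> norm_num
  obtain rfl : x = t := (sub_eq_zero.1 ((mul_eq_zero.1 hval).resolve_left hc0)).symm
  refine ⟨takeOff_iff.2 ⟨hL, ?_⟩, hx, c, Or.inr hc, hR⟩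
  filter_upwards [hR.filter_mono (nhdsWithin_mono _ Set.Ioi_subset_Ici_self),
    self_mem_nhdsWithin] with s hs hst
  rw [hs]
  exact mul_ne_zero hc0 (sub_ne_zero.2 (ne_of_gt hst))

theorem not_takeOff_and_rightGermRoot {C : Set ℝ} {g : ℝ → ℝ} {t c y : ℝ}
    (hL : g =ᶠ[𝓝[≤] t] fun s => c * (s - y)) (hc : c = 1 ∨ c = -1) (hy : y ∈ C)
    (hR : HasLineGerm C (𝓝[≥] t) g) (hv : VertexOf g t) :
    ¬ TakeOff g t ∧ RightGermRoot C g t (2 * t - y) := by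
  have hc0 : c ≠ 0 := by rcases hc with rfl | rfl <;> norm_num
  refine ⟨fun hT => hc0 ?_, ?_⟩
  · have hzero : ∀ᶠ s in 𝓝[<] t, c * (s - y) = 0 * s + 0 := by
      filter_upwards [(hL.symm.trans (takeOff_iff.1 hT).1).filter_mono
        (nhdsWithin_mono _ Set.Iio_subset_Iic_self)] with s hs
      simpa using hs
    simpa using line_eq_affine_of_eventually (nhdsLT_le_nhdsNE t) hzero (y + 1)
  obtain ⟨c', x', hcx', hR⟩ := hR
  have hval : c * (t - y) = c' * (t - x') := by
    rw [← hL.eq_of_nhdsWithin Set.self_mem_Iic, ← hR.eq_of_nhdsWithin Set.self_mem_Ici]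
  rcases hcx' with rfl | ⟨hc', hx'⟩
  · obtain rfl : y = t := by
      simpa [hc0, sub_eq_zero, eq_comm] using hval
    exact ⟨by rwa [two_mul, add_sub_cancel_right], 0, Or.inl rfl,
      hR.trans (Eventually.of_forall fun s => by simp)⟩
  rcases hc with rfl | rfl <;> rcases hc' with rfl | rfl
  · obtain rfl : x' = y := by linarith
    exact absurd (not_vertexOf_of_eventuallyEq hL hR) (not_not.2 hv)
  · obtain rfl : x' = 2 * t - y := by linarith
    exact ⟨hx', -1, Or.inr (Or.inr rfl), hR⟩
  · obtain rfl : x' = 2 * t - y := by linarith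
    exact ⟨hx', 1, Or.inr (Or.inl rfl), hR⟩
  · obtain rfl : x' = y := by linarith
    exact absurd (not_vertexOf_of_eventuallyEq hL hR) (not_not.2 hv)

section VertexEnumeration

variable {g : ℝ → ℝ} {n : ℕ} {t : Fin (n + 1) → ℝ}

theorem not_vertexOf_of_lt (ht : StrictMono t) (hvert : ∀ s, VertexOf g s ↔ ∃ i, t i = s)
    {r : ℝ} (hr : r < t 0) : ¬ VertexOf g r := fun hr' => by
  obtain ⟨j, rfl⟩ := (hvert r).1 hr'
  exact (ht.monotone (Fin.zero_le j)).not_gt hr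

theorem not_vertexOf_of_mem_Ioo (ht : StrictMono t) (hvert : ∀ s, VertexOf g s ↔ ∃ i, t i = s)
    {i : Fin n} {r : ℝ} (hr : r ∈ Set.Ioo (t i.castSucc) (t i.succ)) : ¬ VertexOf g r :=
  fun hr' => by
    obtain ⟨j, rfl⟩ := (hvert r).1 hr'
    rw [Set.mem_Ioo, ht.lt_iff_lt, ht.lt_iff_lt] at hr
    exact (Fin.castSucc_lt_iff_succ_le.1 hr.1).not_gt hr.2

end VertexEnumeration

theorem landscape_vertices_give_critical_values_general (f : ℝ → ℝ) (a b : ℝ)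
    (D : Multiset (ℝ × ℝ))
    (hD : ∀ p ∈ D, p.1 < p.2 ∧ p.1 ∈ CritVal f a b ∧ p.2 ∈ CritVal f a b)
    (k : ℕ)
    (n : ℕ) (t : Fin (n + 1) → ℝ) (ht : StrictMono t)
    (hvert : ∀ s : ℝ, VertexOf (landscape D k) s ↔ ∃ i, t i = s)
    (y : Fin (n + 1) → ℝ)
    (hy0 : y 0 = t 0)
    (hyT : ∀ i, TakeOff (landscape D k) (t i) → y i = t i)
    (hyR : ∀ i : Fin n, ¬ TakeOff (landscape D k) (t i.succ) →
      y i.succ = 2 * (t i.succ - y i.castSucc / 2)) :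
    ∀ i, y i ∈ CritVal f a b := by
  set g := landscape D k
  have hC : ∀ p ∈ D, p.1 ∈ CritVal f a b ∧ p.2 ∈ CritVal f a b := fun p hp => (hD p hp).2
  have hleft : ∀ r, HasLineGerm (CritVal f a b) (𝓝[≤] r) g :=
    fun r => hasLineGerm_landscape (Or.inr rfl) hC k
  have hright : ∀ r, HasLineGerm (CritVal f a b) (𝓝[≥] r) g :=
    fun r => hasLineGerm_landscape (Or.inl rfl) hC k
  have hvt : ∀ i, VertexOf g (t i) := fun i => (hvert _).2 ⟨i, rfl⟩
  have hzero : g =ᶠ[𝓝[≤] t 0] 0 := by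
    obtain ⟨c, x, -, hw⟩ := hleft (t 0)
    exact eventuallyEq_zero_nhdsLE_of_forall_not_vertexOf (fun r => not_vertexOf_of_lt ht hvert)
      (landscape_eventually_eq_zero_atBot D k) hw
  suffices ∀ i, RightGermRoot (CritVal f a b) g (t i) (y i) from fun i => (this i).1
  refine Fin.induction ?_ fun i ⟨hyi, c, hc, hR⟩ => ?_
  · rw [hy0]
    exact (takeOff_and_rightGermRoot hzero (hright _) (hvt 0)).2
  have hL : g =ᶠ[𝓝[≤] t i.succ] fun s => c * (s - y i.castSucc) := by
    obtain ⟨c', x', -, hw⟩ := hleft (t i.succ)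
    exact eventuallyEq_nhdsLE_of_forall_not_vertexOf_Ioo (ht Fin.castSucc_lt_succ)
      (fun r => not_vertexOf_of_mem_Ioo ht hvert) hR hw
  rcases hc with rfl | hc
  · obtain ⟨hT, h⟩ := takeOff_and_rightGermRoot
      (hL.trans (Eventually.of_forall fun s => by simp)) (hright _) (hvt _)
    rwa [hyT _ hT]
  · obtain ⟨hT, h⟩ := not_takeOff_and_rightGermRoot hL hc hyi (hright _) (hvt _)
    rwa [hyR i hT, show 2 * (t i.succ - y i.castSucc / 2) = 2 * t i.succ - y i.castSucc by ring]

/-- let `λ_k` be a nonzero persistence landscape of a continuous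
`f : [a,b] → ℝ` with respect to vertical sublevel-set persistence (whose diagram `D`
has all coordinates equal to critical values of `f`), and let `t 0 < t 1 < ⋯` be the
`t`-coordinates of the vertices of the graph of `λ_k`. Define `y 0 = t 0` and
recursively `y i = t i` if `(t i, 0)` is a take-off point and `y i = 2(t i − y (i−1)/2)`
otherwise. Then every `y i` is the `y`-value of a critical point of `f`. -/
theorem landscape_vertices_give_critical_values (f : ℝ → ℝ) (a b : ℝ) (hab : a ≤ b)
    (hf : ContinuousOn f (Set.Icc a b))
    (D : Multiset (ℝ × ℝ))
    (hD : ∀ p ∈ D, p.1 < p.2 ∧ p.1 ∈ CritVal f a b ∧ p.2 ∈ CritVal f a b)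
    (k : ℕ) (hk : ∃ t, landscape D k t ≠ 0)
    (n : ℕ) (t : Fin (n + 1) → ℝ) (ht : StrictMono t)
    (hvert : ∀ s : ℝ, VertexOf (landscape D k) s ↔ ∃ i, t i = s)
    (y : Fin (n + 1) → ℝ)
    (hy0 : y 0 = t 0)
    (hyT : ∀ i, TakeOff (landscape D k) (t i) → y i = t i)
    (hyR : ∀ i : Fin n, ¬ TakeOff (landscape D k) (t i.succ) →
      y i.succ = 2 * (t i.succ - y i.castSucc / 2)) :
    ∀ i, y i ∈ CritVal f a b :=
  landscape_vertices_give_critical_values_general f a b D hD k n t ht hvert y hy0 hyT hyR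
end

section
/- Let f : [a,b] → ℝ be smooth with a critical point (x₀, y₀), a < x₀ < b, f'(x₀) = 0 and f''(x₀) ≠ 0. Given sequences of angles θ_k → π/2⁻ with pairs of tangent lines to the graph of f of slopes ±1/tan θ_k whose intersections with the line y = y₀ all lie in a fixed interval (x₀ − τ/2, x₀ + τ/2) containing no other critical point, the x-coordinates x* produced by the five-line formula from consecutive pairs converge to x₀. -/
open Real Set Filter

open Topology


lemma aux_sign (φ : ℝ → ℝ) (hdc : Continuous φ) (p q : ℝ)
    (hsign : ∀ x ∈ Set.Ioo p q, φ x ≠ 0)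
    {w x : ℝ} (hw : w ∈ Set.Ioo p q) (hx : x ∈ Set.Ioo p q)
    (hwneg : φ w < 0) : φ x < 0 := by
  rcases lt_trichotomy (φ x) 0 with h|h|h
  · exact h
  · exact absurd h (hsign x hx)
  · exfalso
    have hsub : Set.uIcc w x ⊆ Set.Ioo p q := (Set.ordConnected_Ioo).uIcc_subset hw hx
    have h0 : (0:ℝ) ∈ Set.uIcc (φ w) (φ x) := by
      rw [Set.mem_uIcc]; left; exact ⟨hwneg.le, h.le⟩
    obtain ⟨y, hy, hy0⟩ := intermediate_value_uIcc (hdc.continuousOn) h0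
    exact hsign y (hsub hy) hy0

lemma aux_ne (f : ℝ → ℝ) (hfc : Continuous f) (hdc : Continuous (deriv f))
    (p q : ℝ) (hpq : p < q)
    (hsign : ∀ x ∈ Set.Ioo p q, deriv f x ≠ 0) : f p ≠ f q := by
  have hw : (p + q)/2 ∈ Set.Ioo p q := ⟨by linarith, by linarith⟩
  rcases lt_or_gt_of_ne (hsign _ hw) with hneg | hpos
  · have : StrictAntiOn f (Set.Icc p q) := by
      apply strictAntiOn_of_deriv_neg (convex_Icc p q) hfc.continuousOn
      intro x hx
      rw [interior_Icc] at hx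
      exact aux_sign (deriv f) hdc p q hsign hw hx hneg
    exact (this (Set.left_mem_Icc.2 hpq.le) (Set.right_mem_Icc.2 hpq.le) hpq).ne'
  · have : StrictMonoOn f (Set.Icc p q) := by
      apply strictMonoOn_of_deriv_pos (convex_Icc p q) hfc.continuousOn
      intro x hx
      rw [interior_Icc] at hx
      have := aux_sign (fun y => -(deriv f y)) (hdc.neg) p q
        (fun z hz => neg_ne_zero.mpr (hsign z hz)) hw hx (by simpa using hpos)
      simpa using this
    exact (this (Set.left_mem_Icc.2 hpq.le) (Set.right_mem_Icc.2 hpq.le) hpq).ne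


lemma aux_tendsto (f : ℝ → ℝ) (x₀ y₀ τ : ℝ)
    (hfc : Continuous f) (hdc : Continuous (deriv f))
    (hy : y₀ = f x₀) (hτ : 0 < τ)
    (honly : ∀ x ∈ Set.Ioo (x₀ - τ / 2) (x₀ + τ / 2), x ≠ x₀ → deriv f x ≠ 0)
    (μ c A : ℕ → ℝ)
    (hμ0 : Tendsto μ atTop (nhds 0)) (hμne : ∀ k, μ k ≠ 0)
    (hcin : ∀ k, c k ∈ Set.Ioo (x₀ - τ / 2) (x₀ + τ / 2))
    (hμ : ∀ k, deriv f (c k) = μ k)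
    (hA : ∀ k, A k = c k + (y₀ - f (c k)) / μ k)
    (hAin : ∀ k, A k ∈ Set.Ioo (x₀ - τ / 2) (x₀ + τ / 2)) :
    Tendsto c atTop (nhds x₀) := by
  by_contra hcon
  rw [Metric.tendsto_atTop] at hcon
  push_neg at hcon
  obtain ⟨ε, hε, hfreq⟩ := hcon
  have hfreq' : ∀ N, ∃ n > N, ε ≤ dist (c n) x₀ := by
    intro N
    obtain ⟨n, hn, hd⟩ := hfreq (N + 1)
    exact ⟨n, by omega, hd⟩
  obtain ⟨φ, hφmono, hφ⟩ := extraction_of_frequently_atTop (frequently_atTop'.mpr hfreq')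
  obtain ⟨z, hzK, ψ, hψmono, hψtend⟩ := (isCompact_Icc (a := x₀ - τ/2) (b := x₀ + τ/2)).tendsto_subseq
    (x := c ∘ φ) (fun j => Set.Ioo_subset_Icc_self (hcin (φ j)))
  set n : ℕ → ℕ := φ ∘ ψ with hn_def
  have hnmono : StrictMono n := hφmono.comp hψmono
  have hntendsto : Tendsto n atTop atTop := hnmono.tendsto_atTop
  have hcn : Tendsto (fun j => c (n j)) atTop (nhds z) := hψtend
  -- z ≠ x₀
  have hzd : ε ≤ dist z x₀ := by
    have h1 : Tendsto (fun j => dist (c (n j)) x₀) atTop (nhds (dist z x₀)) :=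
      (hcn.dist tendsto_const_nhds)
    exact ge_of_tendsto h1 (Eventually.of_forall fun j => hφ (ψ j))
  have hzne : z ≠ x₀ := by
    intro h; rw [h] at hzd; simp at hzd; linarith
  -- deriv f z = 0
  have hμn : Tendsto (fun j => μ (n j)) atTop (nhds 0) := hμ0.comp hntendsto
  have hdz : deriv f z = 0 := by
    have h1 : Tendsto (fun j => deriv f (c (n j))) atTop (nhds (deriv f z)) :=
      (hdc.tendsto z).comp hcn
    have h2 : (fun j => deriv f (c (n j))) = fun j => μ (n j) := funext fun j => hμ (n j)
    rw [h2] at h1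
    exact tendsto_nhds_unique h1 hμn
  -- z is an endpoint
  have hznotin : z ∉ Set.Ioo (x₀ - τ / 2) (x₀ + τ / 2) := fun h => honly z h hzne hdz
  have hlo : x₀ - τ/2 < x₀ := by linarith
  have hhi : x₀ < x₀ + τ/2 := by linarith
  -- f z ≠ y₀
  have hfz : f z ≠ y₀ := by
    rcases eq_or_lt_of_le hzK.1 with h | h
    · -- z = x₀ - τ/2
      have hz : z = x₀ - τ/2 := h.symm
      have : f z ≠ f x₀ := by
        apply aux_ne f hfc hdc z x₀ (by rw [hz]; linarith)
        intro x hx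
        exact honly x ⟨by rw [hz] at hx; exact hx.1, by linarith [hx.2]⟩ (ne_of_lt hx.2)
      rw [hy]; exact this
    · rcases eq_or_lt_of_le hzK.2 with h2 | h2
      · -- z = x₀ + τ/2
        have : f x₀ ≠ f z := by
          apply aux_ne f hfc hdc x₀ z (by rw [h2]; linarith)
          intro x hx
          exact honly x ⟨by linarith [hx.1], by rw [← h2]; exact hx.2⟩ (ne_of_gt hx.1)
        rw [hy]; exact this.symm
      · exact absurd ⟨h, h2⟩ hznotin
  -- |A - c| tends to atTop
  have hnum : Tendsto (fun j => |y₀ - f (c (n j))|) atTop (nhds |y₀ - f z|) := by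
    have : Tendsto (fun j => y₀ - f (c (n j))) atTop (nhds (y₀ - f z)) :=
      tendsto_const_nhds.sub ((hfc.tendsto z).comp hcn)
    exact this.abs
  have hLpos : 0 < |y₀ - f z| := abs_pos.mpr (sub_ne_zero.mpr (Ne.symm hfz))
  have hden : Tendsto (fun j => |μ (n j)|⁻¹) atTop atTop := by
    apply tendsto_inv_nhdsGT_zero.comp
    rw [tendsto_nhdsWithin_iff]
    exact ⟨by simpa using hμn.abs,
      Eventually.of_forall fun j => abs_pos.mpr (hμne (n j))⟩
  have hprod : Tendsto (fun j => |y₀ - f (c (n j))| * |μ (n j)|⁻¹) atTop atTop :=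
    hnum.pos_mul_atTop hLpos hden
  have heq : ∀ j, |A (n j) - c (n j)| = |y₀ - f (c (n j))| * |μ (n j)|⁻¹ := by
    intro j
    rw [hA (n j)]
    rw [add_sub_cancel_left, abs_div, div_eq_mul_inv]
  have hbnd : ∀ j, |A (n j) - c (n j)| ≤ τ := by
    intro j
    have h1 := hAin (n j); have h2 := hcin (n j)
    rw [abs_sub_le_iff]
    constructor <;> [skip; skip] <;>
      · have := h1.1; have := h1.2; have := h2.1; have := h2.2; linarith
  have : ∀ᶠ j in atTop, τ < |A (n j) - c (n j)| := by
    have := hprod.eventually_gt_atTop τ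
    filter_upwards [this] with j hj
    rw [heq j]; exact hj
  obtain ⟨j, hj⟩ := this.exists
  exact absurd (hbnd j) (not_le.mpr hj)


lemma aux_inverse (f : ℝ → ℝ) (x₀ : ℝ) (hf : ContDiff ℝ (⊤ : ℕ∞) f)
    (hcrit : deriv f x₀ = 0) (hnd : deriv (deriv f) x₀ ≠ 0) :
    ∃ (g : ℝ → ℝ) (r Q : ℝ), 0 < r ∧ 0 < Q ∧ g 0 = x₀ ∧ ContinuousAt g 0 ∧
      (∀ᶠ x in nhds x₀, g (deriv f x) = x) ∧
      (∀ y ∈ Set.Icc (-r) r, deriv f (g y) = y ∧ HasDerivAt g (deriv g y) y ∧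
        |deriv g y| ≤ 2*Q ∧ Q/2 ≤ |deriv g y|) := by
  have hfi : ContDiff ℝ (⊤ : ℕ∞) f := hf.of_le (by simp)
  have hf₁ : ContDiff ℝ (⊤ : ℕ∞) (deriv f) := (contDiff_infty_iff_deriv.mp hfi).2
  have hca : ContDiffAt ℝ (⊤ : ℕ∞) (deriv f) x₀ := hf₁.contDiffAt
  have hn1 : (1 : WithTop ℕ∞) ≤ (⊤ : ℕ∞) := WithTop.coe_le_coe.mpr le_top
  have hq' : HasStrictDerivAt (deriv f) (deriv (deriv f) x₀) x₀ := hca.hasStrictDerivAt (by simp)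
  set q := deriv (deriv f) x₀ with hqdef
  set g : ℝ → ℝ := hq'.localInverse (deriv f) q x₀ hnd with hg_def
  have hsf : HasStrictFDerivAt (deriv f)
      (ContinuousLinearEquiv.unitsEquivAut ℝ (Units.mk0 q hnd) : ℝ →L[ℝ] ℝ) x₀ :=
    hq'.hasStrictFDerivAt_equiv hnd
  have hg0 : g 0 = x₀ := by
    have := hsf.localInverse_apply_image
    rwa [hcrit] at this
  have hgderiv0 : HasStrictDerivAt g q⁻¹ 0 := by
    have := hq'.to_localInverse (hf' := hnd)
    rwa [hcrit] at this
  have hleft : ∀ᶠ x in nhds x₀, g (deriv f x) = x := hsf.eventually_left_inverse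
  have hright : ∀ᶠ y in nhds (0:ℝ), deriv f (g y) = y := by
    have := hsf.eventually_right_inverse
    rwa [hcrit] at this
  have hfd : HasFDerivAt (deriv f)
      (ContinuousLinearEquiv.unitsEquivAut ℝ (Units.mk0 q hnd) : ℝ →L[ℝ] ℝ) x₀ :=
    hq'.hasDerivAt.hasFDerivAt_equiv hnd
  have hgsmooth : ContDiffAt ℝ (⊤ : ℕ∞) g 0 := by
    have := hca.to_localInverse (f' := ContinuousLinearEquiv.unitsEquivAut ℝ (Units.mk0 q hnd))
      hfd (by simp)
    rw [hcrit] at this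
    exact this
  have hg2 : ContDiffAt ℝ 2 g 0 := hgsmooth.of_le (WithTop.coe_le_coe.mpr le_top)
  obtain ⟨u, hu_nhds, hu⟩ := hg2.contDiffOn le_rfl (by norm_num)
  set v := interior u with hv_def
  have hvo : IsOpen v := isOpen_interior
  have hv0 : (0:ℝ) ∈ v := mem_interior_iff_mem_nhds.mpr hu_nhds
  have huv : ContDiffOn ℝ 2 g v := hu.mono interior_subset
  have hgderiv_cont : ContinuousOn (deriv g) v :=
    huv.continuousOn_deriv_of_isOpen hvo (by norm_num)
  have hgdiff : ∀ y ∈ v, HasDerivAt g (deriv g y) y := fun y hy =>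
    ((huv.differentiableOn (by norm_num)).differentiableAt (hvo.mem_nhds hy)).hasDerivAt
  set Q := |q⁻¹| with hQ_def
  have hQ : 0 < Q := abs_pos.mpr (inv_ne_zero hnd)
  have hgd0 : deriv g 0 = q⁻¹ := hgderiv0.hasDerivAt.deriv
  have hE3 : ∀ᶠ y in nhds (0:ℝ), |deriv g y - q⁻¹| < Q/2 := by
    have hct : ContinuousAt (deriv g) 0 := hgderiv_cont.continuousAt (hvo.mem_nhds hv0)
    have : Tendsto (deriv g) (nhds 0) (nhds q⁻¹) := by
      have := hct.tendsto; rwa [hgd0] at this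
    have := this.eventually (Metric.ball_mem_nhds q⁻¹ (half_pos hQ))
    filter_upwards [this] with y hy
    rwa [Real.dist_eq] at hy
  have hcomb := hright.and ((hvo.eventually_mem hv0).and hE3)
  rw [Metric.eventually_nhds_iff] at hcomb
  obtain ⟨ε, hε, hball⟩ := hcomb
  refine ⟨g, ε/2, Q, half_pos hε, hQ, hg0, hgsmooth.continuousAt, hleft, ?_⟩
  intro y hy
  have hyd : dist y 0 < ε := by
    rw [Real.dist_eq, sub_zero]
    rw [Set.mem_Icc] at hy
    rw [abs_lt]
    constructor <;> linarith [hy.1, hy.2]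
  obtain ⟨h1, h2, h3⟩ := hball hyd
  refine ⟨h1, hgdiff y h2, ?_, ?_⟩
  · calc |deriv g y| ≤ |deriv g y - q⁻¹| + |q⁻¹| := by
          have := abs_sub_abs_le_abs_sub (deriv g y) q⁻¹; linarith [abs_sub_le (deriv g y) q⁻¹ 0] 
    _ ≤ 2*Q := by rw [← hQ_def]; linarith
  · have := abs_sub_abs_le_abs_sub q⁻¹ (deriv g y)
    rw [abs_sub_comm] at this
    rw [← hQ_def] at *
    linarith


section
variable (f g : ℝ → ℝ) (x₀ y₀ r Q : ℝ)

lemma aux_chi (hfd : Differentiable ℝ f) (hg0 : g 0 = x₀) (hy : y₀ = f x₀)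
    (hP : ∀ y ∈ Set.Icc (-r) r, deriv f (g y) = y ∧ HasDerivAt g (deriv g y) y ∧
      |deriv g y| ≤ 2*Q ∧ Q/2 ≤ |deriv g y|) (hQ : 0 ≤ Q) :
    ∀ y ∈ Set.Icc (-r) r, |f (g y) - y₀| ≤ 2*Q*y^2 := by
  intro y hy'
  have h0 : (0:ℝ) ∈ Set.Icc (-r) r := by
    rcases hy' with ⟨h1, h2⟩; constructor <;> [linarith; linarith]
  have hsub : Set.uIcc 0 y ⊆ Set.Icc (-r) r := Set.ordConnected_Icc.uIcc_subset h0 hy'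
  have key := Convex.norm_image_sub_le_of_norm_hasDerivWithin_le
    (f := fun t => f (g t)) (f' := fun t => t * deriv g t) (s := Set.uIcc 0 y) (C := |y| * (2*Q))
    (fun t ht => by
      have hmem := hsub ht
      have hg_t : HasDerivAt g (deriv g t) t := (hP t hmem).2.1
      have hf_t : HasDerivAt f (deriv f (g t)) (g t) := (hfd (g t)).hasDerivAt
      have comp := HasDerivAt.comp t hf_t hg_t
      rw [(hP t hmem).1] at comp
      exact comp.hasDerivWithinAt)
    (fun t ht => by
      have hmem := hsub ht
      have habs : |t| ≤ |y| := by
        rcases ht with ⟨h1, h2⟩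
        rw [abs_le]
        constructor
        · calc -|y| ≤ min 0 y := le_min (neg_nonpos.mpr (abs_nonneg y)) (neg_abs_le y)
          _ ≤ t := h1
        · calc t ≤ max 0 y := h2
          _ ≤ |y| := max_le (abs_nonneg y) (le_abs_self y)
      calc ‖t * deriv g t‖ = |t| * |deriv g t| := abs_mul _ _
        _ ≤ |y| * (2*Q) := by
            apply mul_le_mul habs (hP t hmem).2.2.1 (abs_nonneg _) (abs_nonneg _))
    (convex_uIcc 0 y) Set.left_mem_uIcc Set.right_mem_uIcc
  have : ‖f (g y) - f (g 0)‖ ≤ |y| * (2*Q) * ‖y - 0‖ := key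
  rw [hg0, ← hy, sub_zero, Real.norm_eq_abs, Real.norm_eq_abs] at this
  calc |f (g y) - y₀| ≤ |y| * (2*Q) * |y| := this
    _ = 2*Q*y^2 := by rw [mul_comm (|y|) (2*Q), mul_assoc, abs_mul_abs_self]; ring

lemma aux_glip
    (hP : ∀ y ∈ Set.Icc (-r) r, deriv f (g y) = y ∧ HasDerivAt g (deriv g y) y ∧
      |deriv g y| ≤ 2*Q ∧ Q/2 ≤ |deriv g y|) :
    ∀ y ∈ Set.Icc (-r) r, ∀ z ∈ Set.Icc (-r) r, |g y - g z| ≤ 2*Q*|y - z| := by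
  intro y hy z hz
  have key := Convex.norm_image_sub_le_of_norm_hasDerivWithin_le
    (f := g) (f' := deriv g) (s := Set.Icc (-r) r) (C := 2*Q)
    (fun t ht => ((hP t ht).2.1).hasDerivWithinAt)
    (fun t ht => (hP t ht).2.2.1)
    (convex_Icc _ _) hz hy
  simpa [Real.norm_eq_abs] using key

lemma aux_EE_deriv (hfd : Differentiable ℝ f)
    (hP : ∀ y ∈ Set.Icc (-r) r, deriv f (g y) = y ∧ HasDerivAt g (deriv g y) y ∧
      |deriv g y| ≤ 2*Q ∧ Q/2 ≤ |deriv g y|) :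
    ∀ m, 0 < m → m ≤ r →
      HasDerivAt (fun t => (g (-t) + g t)/2 - x₀ + (f (g (-t)) - f (g t))/(2*t))
        (-(f (g (-m)) - f (g m))/(2*m^2)) m := by
  intro m hm0 hmr
  have hmem : m ∈ Set.Icc (-r) r := ⟨by linarith, hmr⟩
  have hmem' : -m ∈ Set.Icc (-r) r := ⟨by linarith, by linarith⟩
  have hgd_m : HasDerivAt g (deriv g m) m := (hP m hmem).2.1
  have hgd_n : HasDerivAt g (deriv g (-m)) (-m) := (hP (-m) hmem').2.1
  have h1 : HasDerivAt (fun t : ℝ => g (-t)) (deriv g (-m) * (-1)) m :=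
    HasDerivAt.comp m hgd_n (hasDerivAt_neg m)
  have h3 : HasDerivAt (fun t : ℝ => f (g (-t))) (-m * (deriv g (-m) * (-1))) m := by
    have := HasDerivAt.comp m ((hfd (g (-m))).hasDerivAt) h1
    rwa [(hP (-m) hmem').1] at this
  have h4 : HasDerivAt (fun t : ℝ => f (g t)) (m * deriv g m) m := by
    have := HasDerivAt.comp m ((hfd (g m)).hasDerivAt) hgd_m
    rwa [(hP m hmem).1] at this
  have hden : HasDerivAt (fun t : ℝ => 2*t) 2 m := by
    simpa using (hasDerivAt_id m).const_mul 2
  have hfrac := (h3.sub h4).div hden (by positivity)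
  have hlin := ((h1.add hgd_m).div_const 2).sub_const x₀
  have hsum := hlin.add hfrac
  refine hsum.congr_deriv ?_
  simp only [Pi.sub_apply]
  field_simp
  ring

lemma aux_DD_deriv (hfd : Differentiable ℝ f)
    (hP : ∀ y ∈ Set.Icc (-r) r, deriv f (g y) = y ∧ HasDerivAt g (deriv g y) y ∧
      |deriv g y| ≤ 2*Q ∧ Q/2 ≤ |deriv g y|) :
    ∀ m, 0 < m → m ≤ r →
      HasDerivAt (fun t => t*(g (-t) - g t) + f (g (-t)) + f (g t) - 2*y₀)
        (g (-m) - g m) m := by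
  intro m hm0 hmr
  have hmem : m ∈ Set.Icc (-r) r := ⟨by linarith, hmr⟩
  have hmem' : -m ∈ Set.Icc (-r) r := ⟨by linarith, by linarith⟩
  have hgd_m : HasDerivAt g (deriv g m) m := (hP m hmem).2.1
  have hgd_n : HasDerivAt g (deriv g (-m)) (-m) := (hP (-m) hmem').2.1
  have h1 : HasDerivAt (fun t : ℝ => g (-t)) (deriv g (-m) * (-1)) m :=
    HasDerivAt.comp m hgd_n (hasDerivAt_neg m)
  have h3 : HasDerivAt (fun t : ℝ => f (g (-t))) (-m * (deriv g (-m) * (-1))) m := by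
    have := HasDerivAt.comp m ((hfd (g (-m))).hasDerivAt) h1
    rwa [(hP (-m) hmem').1] at this
  have h4 : HasDerivAt (fun t : ℝ => f (g t)) (m * deriv g m) m := by
    have := HasDerivAt.comp m ((hfd (g m)).hasDerivAt) hgd_m
    rwa [(hP m hmem).1] at this
  have hprod : HasDerivAt (fun t : ℝ => t * (g (-t) - g t))
      (1 * (g (-m) - g m) + m * (deriv g (-m) * (-1) - deriv g m)) m :=
    (hasDerivAt_id m).mul (h1.sub hgd_m)
  have hsum := ((hprod.add h3).add h4).sub_const (2*y₀)
  refine hsum.congr_deriv ?_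
  ring

lemma aux_gap (hQ : 0 < Q)
    (hP : ∀ y ∈ Set.Icc (-r) r, deriv f (g y) = y ∧ HasDerivAt g (deriv g y) y ∧
      |deriv g y| ≤ 2*Q ∧ Q/2 ≤ |deriv g y|) :
    ∀ m, 0 < m → m ≤ r → Q*m ≤ |g (-m) - g m| := by
  intro m hm0 hmr
  have hsub : Set.Icc (-m) m ⊆ Set.Icc (-r) r := by
    apply Set.Icc_subset_Icc <;> linarith
  obtain ⟨ζ, hζ, hslope⟩ := exists_hasDerivAt_eq_slope g (deriv g) (by linarith : -m < m)
    (fun x hx => ((hP x (hsub hx)).2.1).continuousAt.continuousWithinAt)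
    (fun x hx => (hP x (hsub (Set.mem_Icc_of_Ioo hx))).2.1)
  have hζmem : ζ ∈ Set.Icc (-r) r := hsub (Set.mem_Icc_of_Ioo hζ)
  have hlow := (hP ζ hζmem).2.2.2
  rw [hslope] at hlow
  have h2m : m - -m = 2*m := by ring
  rw [h2m, abs_div, abs_of_pos (by linarith : (0:ℝ) < 2*m)] at hlow
  rw [le_div_iff₀ (by linarith : (0:ℝ) < 2*m)] at hlow
  calc Q*m = Q/2*(2*m) := by ring
    _ ≤ |g m - g (-m)| := hlow
    _ = |g (-m) - g m| := abs_sub_comm _ _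

end

lemma aux_algebra (m₁ m₂ x₀ E₁ E₂ Δ₁ Δ₂ a₁ b₁ a₂ b₂ : ℝ)
    (hs1 : a₁ + b₁ = 2*(x₀ + E₁)) (hs2 : a₂ + b₂ = 2*(x₀ + E₂))
    (hd1 : m₁ * (a₁ - b₁) = Δ₁) (hd2 : m₂ * (a₂ - b₂) = Δ₂)
    (hne : Δ₂ - Δ₁ ≠ 0) :
    (m₂ * (a₁ + b₁) * (a₂ - b₂) - m₁ * (a₁ - b₁) * (a₂ + b₂)) /
      (2 * m₂ * (a₂ - b₂) - 2 * m₁ * (a₁ - b₁))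
      = x₀ + E₂ + Δ₂ * (E₁ - E₂) / (Δ₂ - Δ₁) := by
  have hm2 : m₂ * (a₁ + b₁) * (a₂ - b₂) = (a₁ + b₁) * Δ₂ := by rw [← hd2]; ring
  have hm1 : m₁ * (a₁ - b₁) * (a₂ + b₂) = Δ₁ * (a₂ + b₂) := by rw [← hd1]
  have hD : 2 * m₂ * (a₂ - b₂) - 2 * m₁ * (a₁ - b₁) = 2*(Δ₂ - Δ₁) := by
    rw [← hd1, ← hd2]; ring
  rw [hm2, hm1, hD, hs1, hs2]
  field_simp
  ring










set_option maxHeartbeats 2000000 in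
lemma five_line_main (f : ℝ → ℝ) (a b x₀ y₀ τ : ℝ)
    (hf : ContDiff ℝ (⊤ : ℕ∞) f)
    (hax : a < x₀) (hxb : x₀ < b) (hy : y₀ = f x₀) (hτ : 0 < τ)
    (hint : Set.Ioo (x₀ - τ / 2) (x₀ + τ / 2) ⊆ Set.Ioo a b)
    (hcrit : deriv f x₀ = 0) (hnd : deriv (deriv f) x₀ ≠ 0)
    (honly : ∀ x ∈ Set.Ioo (x₀ - τ / 2) (x₀ + τ / 2), x ≠ x₀ → deriv f x ≠ 0)
    (θ : ℕ → ℝ) (hθ : ∀ k, 0 < θ k ∧ θ k < Real.pi / 2)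
    (hmono : StrictMono θ)
    (hlim : Filter.Tendsto θ Filter.atTop (nhds (Real.pi / 2)))
    (c d A B : ℕ → ℝ)
    (hc : ∀ k, c k ∈ Set.Ioo (x₀ - τ / 2) (x₀ + τ / 2))
    (hd : ∀ k, d k ∈ Set.Ioo (x₀ - τ / 2) (x₀ + τ / 2))
    (hc' : ∀ k, deriv f (c k) = -(1 / Real.tan (θ k)))
    (hd' : ∀ k, deriv f (d k) = 1 / Real.tan (θ k))
    (hA : ∀ k, A k = c k + (y₀ - f (c k)) / deriv f (c k))
    (hB : ∀ k, B k = d k + (y₀ - f (d k)) / deriv f (d k))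
    (hAin : ∀ k, A k ∈ Set.Ioo (x₀ - τ / 2) (x₀ + τ / 2))
    (hBin : ∀ k, B k ∈ Set.Ioo (x₀ - τ / 2) (x₀ + τ / 2)) :
    Filter.Tendsto (fun k =>
      (1 / Real.tan (θ (k + 1)) * (A k + B k) * (A (k + 1) - B (k + 1)) -
          1 / Real.tan (θ k) * (A k - B k) * (A (k + 1) + B (k + 1))) /
        (2 * (1 / Real.tan (θ (k + 1))) * (A (k + 1) - B (k + 1)) -
          2 * (1 / Real.tan (θ k)) * (A k - B k)))
      Filter.atTop (nhds x₀) := by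
  -- basic smoothness facts
  have hfi : ContDiff ℝ (⊤ : ℕ∞) f := hf.of_le (by simp)
  have hfd1 : Differentiable ℝ f := hfi.differentiable (by simp)
  have hfc : Continuous f := hfd1.continuous
  have hf₁ : ContDiff ℝ (⊤ : ℕ∞) (deriv f) := (contDiff_infty_iff_deriv.mp hfi).2
  have hdc : Continuous (deriv f) := hf₁.continuous
  -- slopes
  set m : ℕ → ℝ := fun k => 1 / Real.tan (θ k) with hm_def
  have hm_pos : ∀ k, 0 < m k := fun k =>
    one_div_pos.mpr (Real.tan_pos_of_pos_of_lt_pi_div_two (hθ k).1 (hθ k).2)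
  have hm_ne : ∀ k, m k ≠ 0 := fun k => (hm_pos k).ne'
  have hm_lt : ∀ k, m (k+1) < m k := by
    intro k
    have htan : Real.tan (θ k) < Real.tan (θ (k+1)) :=
      Real.tan_lt_tan_of_lt_of_lt_pi_div_two (by linarith [(hθ k).1, Real.pi_pos] : -(π/2) < θ k)
        (hθ (k+1)).2 (hmono (by omega : k < k+1))
    have h1 : 0 < Real.tan (θ k) := Real.tan_pos_of_pos_of_lt_pi_div_two (hθ k).1 (hθ k).2
    exact one_div_lt_one_div_of_lt h1 htan
  have hm0 : Tendsto m atTop (nhds 0) := by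
    have h1 : Tendsto θ atTop (nhdsWithin (π/2) (Set.Iio (π/2))) := by
      rw [tendsto_nhdsWithin_iff]
      exact ⟨hlim, Eventually.of_forall fun k => (hθ k).2⟩
    have h2 : Tendsto (fun k => Real.tan (θ k)) atTop atTop :=
      Real.tendsto_tan_pi_div_two.comp h1
    have h3 : Tendsto (fun k => (Real.tan (θ k))⁻¹) atTop (nhds 0) :=
      tendsto_inv_atTop_zero.comp h2
    simpa [hm_def, one_div] using h3
  have hmk : ∀ n, (1:ℝ) / Real.tan (θ n) = m n := fun _ => rfl
  simp only [hmk]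
  -- convergence of tangency points
  have hc_lim : Tendsto c atTop (nhds x₀) := by
    apply aux_tendsto f x₀ y₀ τ hfc hdc hy hτ honly (fun k => -(m k)) c A
      (by simpa using hm0.neg) (fun k => neg_ne_zero.mpr (hm_ne k)) hc hc'
      (fun k => by rw [hA k, hc' k]) hAin
  have hd_lim : Tendsto d atTop (nhds x₀) := by
    apply aux_tendsto f x₀ y₀ τ hfc hdc hy hτ honly m d B hm0 hm_ne hd hd'
      (fun k => by rw [hB k, hd' k]) hBin
  -- inverse function
  obtain ⟨g, r, Q, hr, hQ, hg0, hgc, hleft, hP⟩ := aux_inverse f x₀ hf hcrit hnd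
  -- the two parametrizing functions
  set EE : ℝ → ℝ := fun t => (g (-t) + g t)/2 - x₀ + (f (g (-t)) - f (g t))/(2*t) with hEE_def
  set DD : ℝ → ℝ := fun t => t*(g (-t) - g t) + f (g (-t)) + f (g t) - 2*y₀ with hDD_def
  have hEEd := aux_EE_deriv f g x₀ r Q hfd1 hP
  have hDDd := aux_DD_deriv f g y₀ r Q hfd1 hP
  have hchi := aux_chi f g x₀ y₀ r Q hfd1 hg0 hy hP hQ.le
  have hglip := aux_glip f g r Q hP
  have hgap := aux_gap f g r Q hQ hP
  -- eventual identification
  have hEv : ∀ᶠ k in atTop, c k = g (-(m k)) ∧ d k = g (m k) ∧ m k ≤ r := by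
    have e1 : ∀ᶠ k in atTop, g (deriv f (c k)) = c k := hc_lim.eventually hleft
    have e2 : ∀ᶠ k in atTop, g (deriv f (d k)) = d k := hd_lim.eventually hleft
    have e3 : ∀ᶠ k in atTop, m k < r := hm0.eventually (eventually_lt_nhds hr)
    filter_upwards [e1, e2, e3] with k h1 h2 h3
    refine ⟨?_, ?_, h3.le⟩
    · rw [← h1, hc' k]
    · rw [← h2, hd' k]
  -- interface equalities
  have hABsum : ∀ n, c n = g (-(m n)) → d n = g (m n) → A n + B n = 2*(x₀ + EE (m n)) := by
    intro n h1 h2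
    have hmn : (1:ℝ) / Real.tan (θ n) = m n := rfl
    have htn : Real.tan (θ n) ≠ 0 :=
      (Real.tan_pos_of_pos_of_lt_pi_div_two (hθ n).1 (hθ n).2).ne'
    rw [hA n, hB n, hc' n, hd' n, h1, h2, hmn]
    simp only [hEE_def]
    rw [← hmn]
    field_simp [htn]
    ring
  have hABdiff : ∀ n, c n = g (-(m n)) → d n = g (m n) → m n * (A n - B n) = DD (m n) := by
    intro n h1 h2
    have hmn : (1:ℝ) / Real.tan (θ n) = m n := rfl
    have htn : Real.tan (θ n) ≠ 0 :=
      (Real.tan_pos_of_pos_of_lt_pi_div_two (hθ n).1 (hθ n).2).ne'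
    rw [hA n, hB n, hc' n, hd' n, h1, h2, hmn]
    simp only [hDD_def]
    rw [← hmn]
    field_simp [htn]
    ring
  -- pointwise bound
  have hbound : ∀ᶠ k in atTop,
      ‖(m (k + 1) * (A k + B k) * (A (k + 1) - B (k + 1)) -
          m k * (A k - B k) * (A (k + 1) + B (k + 1))) /
        (2 * (m (k + 1)) * (A (k + 1) - B (k + 1)) -
          2 * (m k) * (A k - B k)) - x₀‖
      ≤ |EE (m (k+1))| + 16*Q*(m (k+1)) := by
    filter_upwards [hEv, (tendsto_add_atTop_nat 1).eventually hEv] with k hk hk1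
    obtain ⟨hck, hdk, hkr⟩ := hk
    obtain ⟨hck1, hdk1, -⟩ := hk1
    have h1p : 0 < m k := hm_pos k
    have h2p : 0 < m (k+1) := hm_pos (k+1)
    have hlt : m (k+1) < m k := hm_lt k
    have h2r : m (k+1) ≤ r := by linarith
    have hd_ne : m k - m (k+1) ≠ 0 := sub_ne_zero.mpr hlt.ne'
    -- MVT for DD
    have hDDcont : ContinuousOn DD (Set.Icc (m (k+1)) (m k)) := fun x hx =>
      (hDDd x (by linarith [hx.1]) (by linarith [hx.2])).continuousAt.continuousWithinAt
    obtain ⟨ξ, hξ, hslope⟩ := exists_hasDerivAt_eq_slope DD (fun t => g (-t) - g t) hlt hDDcont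
      (fun x hx => hDDd x (by linarith [hx.1]) (by linarith [hx.2]))
    have hξ1 : 0 < ξ := lt_trans h2p hξ.1
    have hξr : ξ ≤ r := by linarith [hξ.2]
    have hgapξ : Q*ξ ≤ |g (-ξ) - g ξ| := hgap ξ hξ1 hξr
    have hsl : DD (m k) - DD (m (k+1)) = (g (-ξ) - g ξ) * (m k - m (k+1)) := by
      rw [eq_div_iff hd_ne] at hslope
      exact hslope.symm
    have hMVT : Q * (m (k+1)) * (m k - m (k+1)) ≤ |DD (m k) - DD (m (k+1))| := by
      rw [hsl, abs_mul, abs_of_pos (sub_pos.mpr hlt)]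
      have h1 : Q * (m (k+1)) ≤ Q * ξ := by nlinarith [hξ.1]
      nlinarith [sub_pos.mpr hlt]
    have hDne : DD (m (k+1)) - DD (m k) ≠ 0 := by
      intro h0
      have : DD (m k) - DD (m (k+1)) = 0 := by linarith
      rw [this, abs_zero] at hMVT
      nlinarith [mul_pos (mul_pos hQ h2p) (sub_pos.mpr hlt)]
    -- algebra
    have halg := aux_algebra (m k) (m (k+1)) x₀ (EE (m k)) (EE (m (k+1))) (DD (m k))
      (DD (m (k+1))) (A k) (B k) (A (k+1)) (B (k+1))
      (hABsum k hck hdk) (hABsum (k+1) hck1 hdk1)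
      (hABdiff k hck hdk) (hABdiff (k+1) hck1 hdk1) hDne
    have hrw : (m (k + 1) * (A k + B k) * (A (k + 1) - B (k + 1)) -
          m k * (A k - B k) * (A (k + 1) + B (k + 1))) /
        (2 * (m (k + 1)) * (A (k + 1) - B (k + 1)) -
          2 * (m k) * (A k - B k))
        = x₀ + EE (m (k+1)) + DD (m (k+1)) * (EE (m k) - EE (m (k+1))) /
            (DD (m (k+1)) - DD (m k)) := halg
    rw [hrw]
    have hsimp : x₀ + EE (m (k+1)) + DD (m (k+1)) * (EE (m k) - EE (m (k+1))) /
            (DD (m (k+1)) - DD (m k)) - x₀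
        = EE (m (k+1)) + DD (m (k+1)) * (EE (m k) - EE (m (k+1))) /
            (DD (m (k+1)) - DD (m k)) := by ring
    rw [hsimp, Real.norm_eq_abs]
    -- bound pieces
    have hchi2 : |f (g (m (k+1))) - y₀| ≤ 2*Q*(m (k+1))^2 := hchi (m (k+1)) ⟨by linarith, h2r⟩
    have hchi2' : |f (g (-(m (k+1)))) - y₀| ≤ 2*Q*(m (k+1))^2 := by
      have := hchi (-(m (k+1))) ⟨by linarith, by linarith⟩
      rwa [neg_sq] at this
    have hDDb : |DD (m (k+1))| ≤ 8*Q*(m (k+1))^2 := by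
      have hX : |m (k+1)*(g (-(m (k+1))) - g (m (k+1)))| ≤ 4*Q*(m (k+1))^2 := by
        rw [abs_mul, abs_of_pos h2p]
        have hgl := hglip (-(m (k+1))) ⟨by linarith, by linarith⟩ (m (k+1)) ⟨by linarith, h2r⟩
        have habs : |-(m (k+1)) - m (k+1)| = 2*(m (k+1)) := by
          rw [show -(m (k+1)) - m (k+1) = -(2*(m (k+1))) by ring, abs_neg,
            abs_of_pos (by linarith)]
        rw [habs] at hgl
        nlinarith
      have hDDeq : DD (m (k+1)) = m (k+1)*(g (-(m (k+1))) - g (m (k+1)))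
          + ((f (g (-(m (k+1)))) - y₀) + (f (g (m (k+1))) - y₀)) := by
        simp only [hDD_def]; ring
      calc |DD (m (k+1))| ≤ |m (k+1)*(g (-(m (k+1))) - g (m (k+1)))|
            + |(f (g (-(m (k+1)))) - y₀) + (f (g (m (k+1))) - y₀)| := by
            rw [hDDeq]; exact abs_add_le _ _
        _ ≤ |m (k+1)*(g (-(m (k+1))) - g (m (k+1)))|
            + (|f (g (-(m (k+1)))) - y₀| + |f (g (m (k+1))) - y₀|) := by
            linarith [abs_add_le (f (g (-(m (k+1)))) - y₀) (f (g (m (k+1))) - y₀)]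
        _ ≤ 8*Q*(m (k+1))^2 := by nlinarith
    have hEEb : |EE (m k) - EE (m (k+1))| ≤ 2*Q*(m k - m (k+1)) := by
      have key := Convex.norm_image_sub_le_of_norm_hasDerivWithin_le
        (f := EE) (f' := fun t => -(f (g (-t)) - f (g t))/(2*t^2))
        (s := Set.Icc (m (k+1)) (m k)) (C := 2*Q)
        (fun x hx => (hEEd x (by linarith [hx.1]) (by linarith [hx.2])).hasDerivWithinAt)
        (fun x hx => by
          have hx1 : 0 < x := by linarith [hx.1]
          have hxr : x ≤ r := by linarith [hx.2]
          have c1 := hchi x ⟨by linarith, hxr⟩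
          have c2 := hchi (-x) ⟨by linarith, by linarith⟩
          rw [neg_sq] at c2
          rw [Real.norm_eq_abs, abs_div, abs_of_pos (by positivity : (0:ℝ) < 2*x^2),
            div_le_iff₀ (by positivity : (0:ℝ) < 2*x^2)]
          have htri : |f (g (-x)) - f (g x)| ≤ |f (g (-x)) - y₀| + |f (g x) - y₀| := by
            have := abs_sub_le (f (g (-x))) y₀ (f (g x))
            rwa [abs_sub_comm y₀] at this
          rw [abs_neg]
          nlinarith)
        (convex_Icc _ _) (Set.left_mem_Icc.mpr hlt.le) (Set.right_mem_Icc.mpr hlt.le)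
      simp only [Real.norm_eq_abs] at key
      rw [abs_of_pos (sub_pos.mpr hlt)] at key
      exact key
    -- combine
    have habsY : |DD (m (k+1)) * (EE (m k) - EE (m (k+1))) / (DD (m (k+1)) - DD (m k))|
        ≤ 16*Q*(m (k+1)) := by
      rw [abs_div, abs_mul]
      have hub : |DD (m (k+1))| * |EE (m k) - EE (m (k+1))|
          ≤ (8*Q*(m (k+1))^2) * (2*Q*(m k - m (k+1))) :=
        mul_le_mul hDDb hEEb (abs_nonneg _) (by positivity)
      have hlb : Q * (m (k+1)) * (m k - m (k+1)) ≤ |DD (m (k+1)) - DD (m k)| := by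
        rwa [abs_sub_comm]
      calc |DD (m (k+1))| * |EE (m k) - EE (m (k+1))| / |DD (m (k+1)) - DD (m k)|
          ≤ (8*Q*(m (k+1))^2) * (2*Q*(m k - m (k+1))) / (Q * (m (k+1)) * (m k - m (k+1))) :=
            div_le_div₀
              (mul_nonneg (by positivity) (mul_nonneg (by positivity) (sub_pos.mpr hlt).le))
              hub (mul_pos (mul_pos hQ h2p) (sub_pos.mpr hlt)) hlb
        _ = 16*Q*(m (k+1)) := by field_simp; ring
    calc |EE (m (k+1)) + DD (m (k+1)) * (EE (m k) - EE (m (k+1))) / (DD (m (k+1)) - DD (m k))|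
        ≤ |EE (m (k+1))| + |DD (m (k+1)) * (EE (m k) - EE (m (k+1))) / (DD (m (k+1)) - DD (m k))| :=
          abs_add_le _ _
      _ ≤ |EE (m (k+1))| + 16*Q*(m (k+1)) := by linarith
  -- limit of the bound
  have hEEk : Tendsto (fun k => EE (m k)) atTop (nhds 0) := by
    have t1 : Tendsto (fun k => g (-(m k))) atTop (nhds x₀) := by
      have h0 : Tendsto (fun k => -(m k)) atTop (nhds (0:ℝ)) := by simpa using hm0.neg
      have := hgc.tendsto.comp h0
      rwa [hg0] at this
    have t2 : Tendsto (fun k => g (m k)) atTop (nhds x₀) := by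
      have := hgc.tendsto.comp hm0
      rwa [hg0] at this
    have hpart1 : Tendsto (fun k => (g (-(m k)) + g (m k))/2 - x₀) atTop (nhds 0) := by
      have := ((t1.add t2).div_const 2).sub_const x₀
      have heq : (x₀ + x₀)/2 - x₀ = 0 := by ring
      rwa [heq] at this
    have hpart2 : Tendsto (fun k => (f (g (-(m k))) - f (g (m k))) / (2*(m k)))
        atTop (nhds 0) := by
      apply squeeze_zero_norm' (a := fun k => 2*Q*(m k))
      · filter_upwards [hm0.eventually (eventually_lt_nhds hr)] with k hkr
        have hkp := hm_pos k
        have c1 := hchi (m k) ⟨by linarith, hkr.le⟩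
        have c2 := hchi (-(m k)) ⟨by linarith, by linarith⟩
        rw [neg_sq] at c2
        rw [Real.norm_eq_abs, abs_div, abs_of_pos (by positivity : (0:ℝ) < 2*(m k)),
          div_le_iff₀ (by positivity : (0:ℝ) < 2*(m k))]
        have htri : |f (g (-(m k))) - f (g (m k))| ≤ |f (g (-(m k))) - y₀| + |f (g (m k)) - y₀| := by
          have := abs_sub_le (f (g (-(m k)))) y₀ (f (g (m k)))
          rwa [abs_sub_comm y₀] at this
        nlinarith
      · have h := hm0.const_mul (2*Q)
        rw [mul_zero] at h
        exact h
    have := hpart1.add hpart2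
    rw [add_zero] at this
    exact this
  have hbnd0 : Tendsto (fun k => |EE (m (k+1))| + 16*Q*(m (k+1))) atTop (nhds 0) := by
    have h1 : Tendsto (fun k => EE (m (k+1))) atTop (nhds 0) :=
      hEEk.comp (tendsto_add_atTop_nat 1)
    have h2 : Tendsto (fun k => |EE (m (k+1))|) atTop (nhds (0:ℝ)) := by
      have h := h1.abs
      rwa [abs_zero] at h
    have h3 : Tendsto (fun k => 16*Q*(m (k+1))) atTop (nhds (0:ℝ)) := by
      have h := (hm0.comp (tendsto_add_atTop_nat 1)).const_mul (16*Q)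
      rw [mul_zero] at h
      exact h
    simpa using h2.add h3
  rw [← tendsto_sub_nhds_zero_iff]
  exact squeeze_zero_norm' hbound hbnd0

/-- convergence of the five-line method: let `f : [a,b] → ℝ` be smooth
with a nondegenerate critical point `(x₀, y₀)`, `a < x₀ < b`, and suppose
`(x₀ − τ/2, x₀ + τ/2)` contains no other critical point. Given angles `θ k → π/2⁻`
and, for each `k`, tangent lines to the graph of `f` of slopes `∓1/tan (θ k)` at
points `c k, d k`, whose intersections `A k, B k` with the line `y = y₀` all lie in
`(x₀ − τ/2, x₀ + τ/2)`, the abscissas produced by the five-line formula from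
consecutive pairs of tangent lines converge to `x₀`. -/
theorem five_line_convergence (f : ℝ → ℝ) (a b x₀ y₀ τ : ℝ)
    (hf : ContDiff ℝ (⊤ : ℕ∞) f)
    (hax : a < x₀) (hxb : x₀ < b) (hy : y₀ = f x₀) (hτ : 0 < τ)
    (hint : Set.Ioo (x₀ - τ / 2) (x₀ + τ / 2) ⊆ Set.Ioo a b)
    (hcrit : deriv f x₀ = 0) (hnd : deriv (deriv f) x₀ ≠ 0)
    (honly : ∀ x ∈ Set.Ioo (x₀ - τ / 2) (x₀ + τ / 2), x ≠ x₀ → deriv f x ≠ 0)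
    (θ : ℕ → ℝ) (hθ : ∀ k, 0 < θ k ∧ θ k < Real.pi / 2)
    (hmono : StrictMono θ)
    (hlim : Filter.Tendsto θ Filter.atTop (nhds (Real.pi / 2)))
    (c d A B : ℕ → ℝ)
    (hc : ∀ k, c k ∈ Set.Ioo (x₀ - τ / 2) (x₀ + τ / 2))
    (hd : ∀ k, d k ∈ Set.Ioo (x₀ - τ / 2) (x₀ + τ / 2))
    (hc' : ∀ k, deriv f (c k) = -(1 / Real.tan (θ k)))
    (hd' : ∀ k, deriv f (d k) = 1 / Real.tan (θ k))
    (hA : ∀ k, A k = c k + (y₀ - f (c k)) / deriv f (c k))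
    (hB : ∀ k, B k = d k + (y₀ - f (d k)) / deriv f (d k))
    (hAin : ∀ k, A k ∈ Set.Ioo (x₀ - τ / 2) (x₀ + τ / 2))
    (hBin : ∀ k, B k ∈ Set.Ioo (x₀ - τ / 2) (x₀ + τ / 2)) :
    Filter.Tendsto (fun k =>
      (1 / Real.tan (θ (k + 1)) * (A k + B k) * (A (k + 1) - B (k + 1)) -
          1 / Real.tan (θ k) * (A k - B k) * (A (k + 1) + B (k + 1))) /
        (2 * (1 / Real.tan (θ (k + 1))) * (A (k + 1) - B (k + 1)) -
          2 * (1 / Real.tan (θ k)) * (A k - B k)))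
      Filter.atTop (nhds x₀) :=
  five_line_main f a b x₀ y₀ τ hf hax hxb hy hτ hint hcrit hnd honly θ hθ hmono hlim
    c d A B hc hd hc' hd' hA hB hAin hBin
end

section
/- Let f : ℝ → ℝ be C² with f''(x₀) ≠ 0 and f'(x₀) = 0. If (a_n) and (b_n) are sequences converging to x₀ with a_n ≠ b_n, and T_n, S_n are the tangent lines to the graph of f at a_n and b_n respectively, then for n large T_n and S_n are not parallel, and the x-coordinates of their intersection points converge to x₀. -/
open Filter

open Set in
lemma aux_between (f : ℝ → ℝ) (hd : Differentiable ℝ f)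
    {lo hi : ℝ}
    (hm : StrictMonoOn (deriv f) (Set.Icc lo hi) ∨ StrictAntiOn (deriv f) (Set.Icc lo hi))
    {a b : ℝ} (ha : a ∈ Set.Icc lo hi) (hb : b ∈ Set.Icc lo hi) (hab : a < b) :
    deriv f a ≠ deriv f b ∧
    a ≤ (f b - f a + a * deriv f a - b * deriv f b) / (deriv f a - deriv f b) ∧
    (f b - f a + a * deriv f a - b * deriv f b) / (deriv f a - deriv f b) ≤ b := by
  have hsub : Set.Icc a b ⊆ Set.Icc lo hi :=
    Set.Icc_subset_Icc ha.1 hb.2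
  obtain ⟨c, hc, hcs⟩ := exists_deriv_eq_slope f hab (hd.continuous.continuousOn)
    (hd.differentiableOn)
  have hcmem : c ∈ Set.Icc lo hi := hsub ⟨hc.1.le, hc.2.le⟩
  have hfb : f b - f a = deriv f c * (b - a) := by
    rw [hcs, div_mul_cancel₀ _ (by linarith : b - a ≠ 0)]
  have hba : (0:ℝ) < b - a := by linarith
  rcases hm with hm | hm
  · have hAC : deriv f a < deriv f c := hm ha hcmem hc.1
    have hCB : deriv f c < deriv f b := hm hcmem hb hc.2
    have hΔ : deriv f a - deriv f b < 0 := by linarith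
    refine ⟨by intro h; rw [h] at hAC; linarith, ?_, ?_⟩
    · rw [le_div_iff_of_neg hΔ]
      nlinarith
    · rw [div_le_iff_of_neg hΔ]
      nlinarith
  · have hAC : deriv f c < deriv f a := hm ha hcmem hc.1
    have hCB : deriv f b < deriv f c := hm hcmem hb hc.2
    have hΔ : (0:ℝ) < deriv f a - deriv f b := by linarith
    refine ⟨by intro h; rw [h] at hAC; linarith, ?_, ?_⟩
    · rw [le_div_iff₀ hΔ]
      nlinarith
    · rw [div_le_iff₀ hΔ]
      nlinarith

/-- let `f` be `C²` with `f'(x₀) = 0` and `f''(x₀) ≠ 0`. If `a n → x₀`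
and `b n → x₀` with `a n ≠ b n`, then for large `n` the tangent lines to the graph of
`f` at `a n` and `b n` are not parallel, and the `x`-coordinates of their intersection
points converge to `x₀`. -/
theorem tangent_intersections_converge (f : ℝ → ℝ) (x₀ : ℝ)
    (hf : ContDiff ℝ 2 f)
    (h1 : deriv f x₀ = 0) (h2 : deriv (deriv f) x₀ ≠ 0)
    (a b : ℕ → ℝ) (hab : ∀ n, a n ≠ b n)
    (ha : Filter.Tendsto a Filter.atTop (nhds x₀))
    (hb : Filter.Tendsto b Filter.atTop (nhds x₀)) :
    (∀ᶠ n in Filter.atTop, deriv f (a n) ≠ deriv f (b n)) ∧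
    Filter.Tendsto (fun n =>
        (f (b n) - f (a n) + a n * deriv f (a n) - b n * deriv f (b n)) /
          (deriv f (a n) - deriv f (b n)))
      Filter.atTop (nhds x₀) := by
  have hf' : ContDiff ℝ ((1:ℕ∞) + 1) f := by norm_num; exact hf
  obtain ⟨hd, -, hf1⟩ := contDiff_succ_iff_deriv.mp hf'
  obtain ⟨hd', -, hf0⟩ := contDiff_succ_iff_deriv.mp (show ContDiff ℝ ((0:ℕ∞)+1) (deriv f) by norm_num; exact hf1)
  have hcont : Continuous (deriv (deriv f)) := hf0.continuous
  -- find δ > 0 such that deriv f is strictly monotone or antitone on Icc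
  have key : ∃ δ > 0, StrictMonoOn (deriv f) (Set.Icc (x₀-δ) (x₀+δ)) ∨
      StrictAntiOn (deriv f) (Set.Icc (x₀-δ) (x₀+δ)) := by
    rcases lt_or_gt_of_ne h2 with hneg | hpos
    · have : (deriv (deriv f)) ⁻¹' (Set.Iio 0) ∈ nhds x₀ :=
        hcont.continuousAt.preimage_mem_nhds (Iio_mem_nhds hneg)
      obtain ⟨ε, hε, hball⟩ := Metric.mem_nhds_iff.mp this
      refine ⟨ε/2, by linarith, Or.inr ?_⟩
      apply strictAntiOn_of_deriv_neg (convex_Icc _ _) hd'.continuous.continuousOn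
      intro x hx
      rw [interior_Icc] at hx
      apply hball
      rw [Metric.mem_ball, Real.dist_eq, abs_lt]
      constructor <;> [linarith [hx.1]; linarith [hx.2]]
    · have : (deriv (deriv f)) ⁻¹' (Set.Ioi 0) ∈ nhds x₀ :=
        hcont.continuousAt.preimage_mem_nhds (Ioi_mem_nhds hpos)
      obtain ⟨ε, hε, hball⟩ := Metric.mem_nhds_iff.mp this
      refine ⟨ε/2, by linarith, Or.inl ?_⟩
      apply strictMonoOn_of_deriv_pos (convex_Icc _ _) hd'.continuous.continuousOn
      intro x hx
      rw [interior_Icc] at hx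
      apply hball
      rw [Metric.mem_ball, Real.dist_eq, abs_lt]
      constructor <;> [linarith [hx.1]; linarith [hx.2]]
  obtain ⟨δ, hδ, hm⟩ := key
  have hIcc : Set.Icc (x₀-δ) (x₀+δ) ∈ nhds x₀ := Icc_mem_nhds (by linarith) (by linarith)
  have hIa := ha hIcc
  have hIb := hb hIcc
  have main : ∀ᶠ n in atTop, deriv f (a n) ≠ deriv f (b n) ∧
      min (a n) (b n) ≤ (f (b n) - f (a n) + a n * deriv f (a n) - b n * deriv f (b n)) /
          (deriv f (a n) - deriv f (b n)) ∧
      (f (b n) - f (a n) + a n * deriv f (a n) - b n * deriv f (b n)) /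
          (deriv f (a n) - deriv f (b n)) ≤ max (a n) (b n) := by
    filter_upwards [hIa, hIb] with n hna hnb
    rcases lt_or_gt_of_ne (hab n) with h | h
    · obtain ⟨h1', h2', h3'⟩ := aux_between f hd hm hna hnb h
      exact ⟨h1', le_trans (min_le_left _ _) h2', le_trans h3' (le_max_right _ _)⟩
    · obtain ⟨h1', h2', h3'⟩ := aux_between f hd hm hnb hna h
      have heq : (f (b n) - f (a n) + a n * deriv f (a n) - b n * deriv f (b n)) /
          (deriv f (a n) - deriv f (b n)) =
          (f (a n) - f (b n) + b n * deriv f (b n) - a n * deriv f (a n)) /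
          (deriv f (b n) - deriv f (a n)) := by
        rw [show f (b n) - f (a n) + a n * deriv f (a n) - b n * deriv f (b n) =
          -(f (a n) - f (b n) + b n * deriv f (b n) - a n * deriv f (a n)) by ring,
          show deriv f (a n) - deriv f (b n) = -(deriv f (b n) - deriv f (a n)) by ring,
          neg_div_neg_eq]
      rw [heq]
      exact ⟨fun hc => h1' hc.symm, le_trans (min_le_right _ _) h2',
        le_trans h3' (le_max_left _ _)⟩
  refine ⟨main.mono fun n hn => hn.1, ?_⟩
  have hmin : Tendsto (fun n => min (a n) (b n)) atTop (nhds x₀) := by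
    have := ha.min hb; rwa [min_self] at this
  have hmax : Tendsto (fun n => max (a n) (b n)) atTop (nhds x₀) := by
    have := ha.max hb; rwa [max_self] at this
  exact tendsto_of_tendsto_of_tendsto_of_le_of_le' hmin hmax
    (main.mono fun n hn => hn.2.1) (main.mono fun n hn => hn.2.2)
end
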